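/- Let G be a c-uniform hypergraph on V = {1,…,n}, let α̃ ≥ 0 and τ ∈ ℕ, let S ⊆ V with |S| + 1 ≤ τ, and suppose that for every i ∈ V, every set in 𝒮'(S) and in 𝒮'(S ∪ {i}) has size at most τ/10. Write S_max = S'_max(S) and, for i ∈ V, S^i_max = S'_max(S ∪ {i}). Then for every i ∈ V∖S_max such that no hyperedge of E(S^i_max) contains i, the set S_max ∪ {i} belongs to 𝒮'(S ∪ {i}). -/

import Mathlib

open Finset
open scoped Classical

/-- Φ(S) = α̃ |E(S)| − |S|, where E(S) is the set of hyperedges of `G` contained in `S`. -/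
noncomputable def Phi (n : ℕ) (G : Finset (Finset (Fin n))) (αt : ℝ)
    (S : Finset (Fin n)) : ℝ :=
  αt * ((G.filter fun e => e ⊆ S).card : ℝ) - S.card

/-- Φ°(S): the maximum of Φ over candidate sets `S'` for `S` (sets with
`S ⊆ S'` and `|S'| ≤ τ`). -/
noncomputable def PhiOpt (n : ℕ) (G : Finset (Finset (Fin n))) (αt : ℝ) (τ : ℕ)
    (S : Finset (Fin n)) : ℝ :=
  sSup {x : ℝ | ∃ S' : Finset (Fin n), S ⊆ S' ∧ S'.card ≤ τ ∧ x = Phi n G αt S'}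

/-- 𝒮'(S): the collection of candidate sets for `S` attaining `Φ°(S)`. -/
def OptSets (n : ℕ) (G : Finset (Finset (Fin n))) (αt : ℝ) (τ : ℕ)
    (S : Finset (Fin n)) : Set (Finset (Fin n)) :=
  {S' | S ⊆ S' ∧ S'.card ≤ τ ∧ Phi n G αt S' = PhiOpt n G αt τ S}

/-- S'_max(S): the union of all sets in 𝒮'(S). -/
noncomputable def Smax (n : ℕ) (G : Finset (Finset (Fin n))) (αt : ℝ) (τ : ℕ)
    (S : Finset (Fin n)) : Finset (Fin n) :=
  (Finset.univ.filter fun S' => S' ∈ OptSets n G αt τ S).sup id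

/-!
For `α̃ ≥ 0` the function `Φ` is supermodular, so two optimal candidate sets of size at most
`τ / 10` have an optimal candidate union; hence `S'_max(S)` is itself optimal. If `i` is isolated
in `E(S^i_max)`, deleting `i` from `S^i_max` raises `Φ` by one and leaves a candidate set for `S`,
so `Φ°(S) ≥ Φ°(S ∪ {i}) + 1`. Adding `i` to `S'_max(S)` lowers `Φ` by at most one, so
`Φ(S'_max(S) ∪ {i}) ≥ Φ°(S) - 1 ≥ Φ°(S ∪ {i})`.
-/

theorem card_filter_subset_add_card_filter_subset_le {α : Type*} [DecidableEq α]
    (G : Finset (Finset α)) (A B : Finset α) :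
    #(G.filter (· ⊆ A)) + #(G.filter (· ⊆ B)) ≤
      #(G.filter (· ⊆ A ∪ B)) + #(G.filter (· ⊆ A ∩ B)) := by
  have hinter : G.filter (· ⊆ A) ∩ G.filter (· ⊆ B) = G.filter (· ⊆ A ∩ B) := by
    simp only [← filter_and, subset_inter_iff]
  have hunion : G.filter (· ⊆ A) ∪ G.filter (· ⊆ B) ⊆ G.filter (· ⊆ A ∪ B) := by
    rw [← filter_or]
    exact monotone_filter_right G fun e _ he => he.elim
      (fun h => h.trans subset_union_left) (fun h => h.trans subset_union_right)
  rw [← card_union_add_card_inter, hinter]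
  exact Nat.add_le_add_right (card_le_card hunion) _

section Optimal

variable {n : ℕ} {G : Finset (Finset (Fin n))} {αt : ℝ} {τ : ℕ}

theorem phi_add_phi_le_phi_union_add_phi_inter (hαt : 0 ≤ αt) (A B : Finset (Fin n)) :
    Phi n G αt A + Phi n G αt B ≤ Phi n G αt (A ∪ B) + Phi n G αt (A ∩ B) := by
  have hedges : (#(G.filter (· ⊆ A)) : ℝ) + #(G.filter (· ⊆ B)) ≤
      #(G.filter (· ⊆ A ∪ B)) + #(G.filter (· ⊆ A ∩ B)) := by
    exact_mod_cast card_filter_subset_add_card_filter_subset_le G A B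
  have hcard : (#(A ∪ B) : ℝ) + #(A ∩ B) = #A + #B := by
    exact_mod_cast card_union_add_card_inter A B
  simp only [Phi]
  nlinarith [mul_le_mul_of_nonneg_left hedges hαt]

theorem phi_erase_of_isolated {T : Finset (Fin n)} {i : Fin n} (hi : i ∈ T)
    (hiso : ∀ e ∈ G.filter (· ⊆ T), i ∉ e) :
    Phi n G αt (T.erase i) = Phi n G αt T + 1 := by
  have hedges : G.filter (· ⊆ T.erase i) = G.filter (· ⊆ T) := by
    ext e
    simp only [mem_filter, subset_erase, and_congr_right_iff, and_iff_left_iff_imp]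
    exact fun he hsub => hiso e (mem_filter.2 ⟨he, hsub⟩)
  simp only [Phi, hedges, cast_card_erase_of_mem hi]
  ring

theorem phi_sub_one_le_phi_insert (hαt : 0 ≤ αt) {M : Finset (Fin n)} {i : Fin n}
    (hi : i ∉ M) : Phi n G αt M - 1 ≤ Phi n G αt (insert i M) := by
  have hedges : (#(G.filter (· ⊆ M)) : ℝ) ≤ #(G.filter (· ⊆ insert i M)) := by
    exact_mod_cast card_le_card
      (monotone_filter_right G fun e _ (he : e ⊆ M) => he.trans (subset_insert i M))
  simp only [Phi, card_insert_of_notMem hi]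
  push_cast
  nlinarith [mul_le_mul_of_nonneg_left hedges hαt]

theorem finite_candidate_phi_values (S : Finset (Fin n)) :
    {x : ℝ | ∃ S', S ⊆ S' ∧ #S' ≤ τ ∧ x = Phi n G αt S'}.Finite :=
  (Set.finite_range (Phi n G αt)).subset fun _ ⟨T, _, _, hx⟩ => ⟨T, hx.symm⟩

theorem phi_le_phiOpt {S S' : Finset (Fin n)} (hS : S ⊆ S') (hcard : #S' ≤ τ) :
    Phi n G αt S' ≤ PhiOpt n G αt τ S :=
  le_csSup (finite_candidate_phi_values S).bddAbove ⟨S', hS, hcard, rfl⟩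

theorem mem_optSets_of_phiOpt_le {S S' : Finset (Fin n)} (hS : S ⊆ S') (hcard : #S' ≤ τ)
    (hle : PhiOpt n G αt τ S ≤ Phi n G αt S') : S' ∈ OptSets n G αt τ S :=
  ⟨hS, hcard, le_antisymm (phi_le_phiOpt hS hcard) hle⟩

theorem optSets_nonempty {S : Finset (Fin n)} (hS : #S ≤ τ) :
    (OptSets n G αt τ S).Nonempty := by
  obtain ⟨S', hSS', hcard, hmax⟩ :=
    Set.Nonempty.csSup_mem ⟨Phi n G αt S, show ∃ _, _ from ⟨S, subset_rfl, hS, rfl⟩⟩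
      (finite_candidate_phi_values S)
  exact ⟨S', hSS', hcard, hmax.symm⟩

theorem union_mem_optSets (hαt : 0 ≤ αt) {S A B : Finset (Fin n)}
    (hA : A ∈ OptSets n G αt τ S) (hB : B ∈ OptSets n G αt τ S)
    (hcard : #(A ∪ B) ≤ τ) : A ∪ B ∈ OptSets n G αt τ S := by
  obtain ⟨hSA, hAcard, hAopt⟩ := hA
  obtain ⟨hSB, -, hBopt⟩ := hB
  have hinter : Phi n G αt (A ∩ B) ≤ PhiOpt n G αt τ S :=
    phi_le_phiOpt (subset_inter hSA hSB) ((card_le_card inter_subset_left).trans hAcard)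
  have := phi_add_phi_le_phi_union_add_phi_inter (G := G) hαt A B
  exact mem_optSets_of_phiOpt_le (hSA.trans subset_union_left) hcard (by linarith)

theorem smax_mem_optSets (hαt : 0 ≤ αt) {S : Finset (Fin n)} (hS : #S ≤ τ)
    (hsmall : ∀ S' ∈ OptSets n G αt τ S, (#S' : ℝ) ≤ τ / 10) :
    Smax n G αt τ S ∈ OptSets n G αt τ S := by
  have hclosed : SupClosed (OptSets n G αt τ S) := fun A hA B hB => by
    refine union_mem_optSets hαt hA hB ?_
    have hunion : (#(A ∪ B) : ℝ) ≤ #A + #B := by exact_mod_cast card_union_le A B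
    have : (#(A ∪ B) : ℝ) ≤ τ := by
      linarith [hsmall A hA, hsmall B hB, (Nat.cast_nonneg τ : (0 : ℝ) ≤ τ)]
    exact_mod_cast this
  obtain ⟨S₀, hS₀⟩ := optSets_nonempty (G := G) (αt := αt) hS
  exact hclosed.finsetSup_mem ⟨S₀, by simpa using hS₀⟩ fun S' hS' => by simpa using hS'

theorem phiOpt_insert_add_one_le {S T : Finset (Fin n)} {i : Fin n} (hiS : i ∉ S)
    (hT : T ∈ OptSets n G αt τ (insert i S)) (hiso : ∀ e ∈ G.filter (· ⊆ T), i ∉ e) :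
    PhiOpt n G αt τ (insert i S) + 1 ≤ PhiOpt n G αt τ S := by
  obtain ⟨hST, hTcard, hTopt⟩ := hT
  have hSerase : S ⊆ T.erase i := fun x hx =>
    mem_erase.2 ⟨ne_of_mem_of_not_mem hx hiS, hST (mem_insert_of_mem hx)⟩
  have := phi_le_phiOpt (G := G) (αt := αt) hSerase (card_erase_le.trans hTcard)
  rwa [phi_erase_of_isolated (hST (mem_insert_self i S)) hiso, hTopt] at this

end Optimal

theorem stmt13_general (n : ℕ) (G : Finset (Finset (Fin n)))
    (αt : ℝ) (hαt : 0 ≤ αt) (τ : ℕ) (S : Finset (Fin n)) (hS : S.card + 1 ≤ τ)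
    (h1 : ∀ S' ∈ OptSets n G αt τ S, (S'.card : ℝ) ≤ (τ : ℝ) / 10)
    (h2 : ∀ i : Fin n, ∀ S' ∈ OptSets n G αt τ (insert i S),
      (S'.card : ℝ) ≤ (τ : ℝ) / 10) :
    ∀ i : Fin n, i ∉ Smax n G αt τ S →
      -- i is isolated in E(S^i_max): no hyperedge of E(S^i_max) contains i
      (∀ e ∈ G.filter fun e => e ⊆ Smax n G αt τ (insert i S), i ∉ e) →
      insert i (Smax n G αt τ S) ∈ OptSets n G αt τ (insert i S) := by
  intro i hiM hiso
  have hM := smax_mem_optSets hαt (by omega) h1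
  have hMsmall := h1 _ hM
  obtain ⟨hSM, -, hMopt⟩ := hM
  have hiS : i ∉ S := fun h => hiM (hSM h)
  have hT := smax_mem_optSets hαt (by rw [card_insert_of_notMem hiS]; omega) (h2 i)
  have hgap := phiOpt_insert_add_one_le hiS hT hiso
  have hdrop := phi_sub_one_le_phi_insert (G := G) hαt hiM
  refine mem_optSets_of_phiOpt_le (insert_subset_insert i hSM) ?_ (by linarith)
  have hMcard : 10 * #(Smax n G αt τ S) ≤ τ := by
    have : (10 * #(Smax n G αt τ S) : ℝ) ≤ τ := by linarith
    exact_mod_cast this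
  rw [card_insert_of_notMem hiM]
  omega

theorem stmt13 (n c : ℕ) (G : Finset (Finset (Fin n))) (hG : ∀ e ∈ G, e.card = c)
    (αt : ℝ) (hαt : 0 ≤ αt) (τ : ℕ) (S : Finset (Fin n)) (hS : S.card + 1 ≤ τ)
    (h1 : ∀ S' ∈ OptSets n G αt τ S, (S'.card : ℝ) ≤ (τ : ℝ) / 10)
    (h2 : ∀ i : Fin n, ∀ S' ∈ OptSets n G αt τ (insert i S),
      (S'.card : ℝ) ≤ (τ : ℝ) / 10) :
    ∀ i : Fin n, i ∉ Smax n G αt τ S →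
      -- i is isolated in E(S^i_max): no hyperedge of E(S^i_max) contains i
      (∀ e ∈ G.filter fun e => e ⊆ Smax n G αt τ (insert i S), i ∉ e) →
      insert i (Smax n G αt τ S) ∈ OptSets n G αt τ (insert i S) :=
  stmt13_general n G αt hαt τ S hS h1 h2
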